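/- Suppose (U'₁,U'₂,<') is the result of applying a case II coherent extended Nielsen transformation to a coherent extended word equation (U₁,U₂,<). If (i,j) ∈ B'⁺, then (i,ν(i,j)) mirrors (1,1) with respect to (U₁,U₂,<). -/

import Mathlib

open scoped Classical

namespace ExtWordEq

/-- The type of (candidate) boundary orders: relations on pairs (i,j). -/
abbrev BRel : Type := ℕ × ℕ → ℕ × ℕ → Prop

variable {X : Type*}

/-- The `i`-th side of the word equation (`i = 1` gives `U₁`, anything else `U₂`). -/
def word (U₁ U₂ : List X) (i : ℕ) : List X := if i = 1 then U₁ else U₂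

/-- The variable `U_{i,j}` (1-indexed), as an optional value. -/
def letter (U₁ U₂ : List X) (b : ℕ × ℕ) : Option X := (word U₁ U₂ b.1)[b.2 - 1]?

/-- `b` is a boundary of the word equation `(U₁, U₂)`. -/
def Boundary (U₁ U₂ : List X) (b : ℕ × ℕ) : Prop :=
  (b.1 = 1 ∨ b.1 = 2) ∧ 1 ≤ b.2 ∧ b.2 ≤ (word U₁ U₂ b.1).length

/-- `b` is a boundary of `(U₁, U₂)` or one of the conventional boundaries `(1,0)`, `(2,0)`. -/
def EBoundary (U₁ U₂ : List X) (b : ℕ × ℕ) : Prop :=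
  (b.1 = 1 ∨ b.1 = 2) ∧ b.2 ≤ (word U₁ U₂ b.1).length

/-- Incomparability `a ≈ b` for a strict order. -/
def Incomp (lt : BRel) (a b : ℕ × ℕ) : Prop := ¬ lt a b ∧ ¬ lt b a

/-- `lt` is a boundary order for the word equation `(U₁, U₂)`:
a strict weak order on the boundaries (together with the conventional boundaries
`(1,0) ≈ (2,0)`), extending `(i,j) < (i,j+1)` and with `(1,m) ≈ (2,n)`. -/
structure BoundaryOrder (U₁ U₂ : List X) (lt : BRel) : Prop where
  irrefl : ∀ a, EBoundary U₁ U₂ a → ¬ lt a a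
  trans : ∀ a b c, EBoundary U₁ U₂ a → EBoundary U₁ U₂ b → EBoundary U₁ U₂ c →
    lt a b → lt b c → lt a c
  incomp_trans : ∀ a b c, EBoundary U₁ U₂ a → EBoundary U₁ U₂ b → EBoundary U₁ U₂ c →
    Incomp lt a b → Incomp lt b c → Incomp lt a c
  succ : ∀ i j : ℕ, EBoundary U₁ U₂ (i, j + 1) → lt (i, j) (i, j + 1)
  top : Incomp lt (1, U₁.length) (2, U₂.length)
  bot : Incomp lt (1, 0) (2, 0)

/-- `L(U_{i,1} U_{i,2} ⋯ U_{i,j})` where `L` is the additive extension of a length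
assignment on variables. -/
def prefixLen (U₁ U₂ : List X) (L : X → ℕ) (b : ℕ × ℕ) : ℕ :=
  (((word U₁ U₂ b.1).take b.2).map L).sum

/-- The extended word equation `(U₁, U₂, lt)` is coherent. -/
def Coherent (U₁ U₂ : List X) (lt : BRel) : Prop :=
  ∃ L : X → ℕ, (∀ x, 0 < L x) ∧
    ∀ a b, Boundary U₁ U₂ a → Boundary U₁ U₂ b →
      (lt a b ↔ prefixLen U₁ U₂ L a < prefixLen U₁ U₂ L b)

/-- The boundary `a` cuts the boundary `b`. -/
def Cuts (U₁ U₂ : List X) (lt : BRel) (a b : ℕ × ℕ) : Prop :=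
  Boundary U₁ U₂ a ∧ Boundary U₁ U₂ b ∧ a ≠ b ∧
    lt (a.1, a.2 - 1) b ∧ lt (b.1, b.2 - 1) a

/-- The boundary `a` mirrors the boundary `b`. -/
def Mirrors (U₁ U₂ : List X) (lt : BRel) (a b : ℕ × ℕ) : Prop :=
  Boundary U₁ U₂ a ∧ Boundary U₁ U₂ b ∧ letter U₁ U₂ a = letter U₁ U₂ b ∧
    (¬ Incomp lt a b ∨ ¬ Incomp lt (a.1, a.2 - 1) (b.1, b.2 - 1))

/-- Edge relation of the cut graph `G_{U₁,U₂,<}`. -/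
def CutEdge (U₁ U₂ : List X) (lt : BRel) (a b : ℕ × ℕ) : Prop :=
  ∃ c, Cuts U₁ U₂ lt a c ∧ Mirrors U₁ U₂ lt c b

/-- `w 0, w 1, …, w n` is a cycle (of length `n ≥ 1`) in the cut graph. -/
def IsCycle (U₁ U₂ : List X) (lt : BRel) (n : ℕ) (w : ℕ → ℕ × ℕ) : Prop :=
  0 < n ∧ w n = w 0 ∧ ∀ k < n, CutEdge U₁ U₂ lt (w k) (w (k + 1))

/-- The cut graph `G_{U₁,U₂,<}` is acyclic. -/
def Acyclic (U₁ U₂ : List X) (lt : BRel) : Prop :=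
  ¬ ∃ n w, IsCycle U₁ U₂ lt n w

variable [DecidableEq X]

/-- Case I extended Nielsen transformation (here `x = U_{1,1}`, `y = U_{2,1}`,
and `T(y) = x`). -/
def NielsenI (U₁ U₂ : List X) (lt : BRel) (U₁' U₂' : List X) (lt' : BRel) : Prop :=
  ∃ x y : X, U₁.head? = some x ∧ U₂.head? = some y ∧
    Incomp lt (1, 1) (2, 1) ∧
    U₁' = (U₁.map fun z => if z = y then x else z).tail ∧
    U₂' = (U₂.map fun z => if z = y then x else z).tail ∧
    BoundaryOrder U₁' U₂' lt' ∧
    ∀ a b : ℕ × ℕ, EBoundary U₁' U₂' a → EBoundary U₁' U₂' b →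
      (lt' a b ↔ lt (a.1, a.2 + 1) (b.1, b.2 + 1))

/-- The substitution `T(x) = y x` (identity on other variables), applied to a word. -/
def expand (x y : X) (l : List X) : List X :=
  l.flatMap fun z => if z = x then [y, x] else [z]

/-- The map `μ(i,j) = j + #{j' ≤ j : U_{i,j'} = x} − 1` (as a map on boundaries),
where `x = U_{1,1}`. -/
def mu (U₁ U₂ : List X) (x : X) (b : ℕ × ℕ) : ℕ × ℕ :=
  (b.1, b.2 + ((word U₁ U₂ b.1).take b.2).count x - 1)

/-- The map `ν(i,j) = j − #{j' ≤ j : U'_{i,j'} = x} + 1` (as a map on boundaries),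
where `x = U_{1,1}`. -/
def nu (U₁' U₂' : List X) (x : X) (b : ℕ × ℕ) : ℕ × ℕ :=
  (b.1, b.2 - ((word U₁' U₂' b.1).take b.2).count x + 1)

/-- Membership in `B⁻ = B ∖ {(2,1)}`. -/
def Bminus (U₁ U₂ : List X) (b : ℕ × ℕ) : Prop := Boundary U₁ U₂ b ∧ b ≠ (2, 1)

/-- Membership in `B'⁻ = {(i, μ(i,j)) : (i,j) ∈ B⁻}` (`x = U_{1,1}`). -/
def Bpminus (U₁ U₂ : List X) (x : X) (b' : ℕ × ℕ) : Prop :=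
  ∃ b, Bminus U₁ U₂ b ∧ mu U₁ U₂ x b = b'

/-- Case II extended Nielsen transformation, with the heads `x = U_{1,1}`,
`y = U_{2,1}` made explicit. -/
def NielsenIIxy (U₁ U₂ : List X) (lt : BRel) (U₁' U₂' : List X) (lt' : BRel)
    (x y : X) : Prop :=
  U₁.head? = some x ∧ U₂.head? = some y ∧
  lt (2, 1) (1, 1) ∧
  U₁' = (expand x y U₁).tail ∧
  U₂' = (expand x y U₂).tail ∧
  BoundaryOrder U₁' U₂' lt' ∧
  ∀ a b, Bpminus U₁ U₂ x a → Bpminus U₁ U₂ x b →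
    (lt' a b ↔ lt (nu U₁' U₂' x a) (nu U₁' U₂' x b))

/-- Case II extended Nielsen transformation. -/
def NielsenII (U₁ U₂ : List X) (lt : BRel) (U₁' U₂' : List X) (lt' : BRel) : Prop :=
  ∃ x y : X, NielsenIIxy U₁ U₂ lt U₁' U₂' lt' x y

/-- The dual boundary order. -/
def dualRel (lt : BRel) : BRel := fun a b => lt (3 - a.1, a.2) (3 - b.1, b.2)

/-- Case III extended Nielsen transformation: case II applied to the dual,
then dualized back. -/
def NielsenIII (U₁ U₂ : List X) (lt : BRel) (U₁' U₂' : List X) (lt' : BRel) : Prop :=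
  NielsenII U₂ U₁ (dualRel lt) U₂' U₁' (dualRel lt')

/-- `(U₁', U₂', lt')` is an extended Nielsen transformation of the nontrivial coherent
extended word equation `(U₁, U₂, lt)`. -/
def ExtNielsen (U₁ U₂ : List X) (lt : BRel) (U₁' U₂' : List X) (lt' : BRel) : Prop :=
  U₁ ≠ [] ∧ U₂ ≠ [] ∧ BoundaryOrder U₁ U₂ lt ∧ Coherent U₁ U₂ lt ∧
    (NielsenI U₁ U₂ lt U₁' U₂' lt' ∨ NielsenII U₁ U₂ lt U₁' U₂' lt' ∨
      NielsenIII U₁ U₂ lt U₁' U₂' lt')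

/-- A coherent extended Nielsen transformation. -/
def CohNielsen (U₁ U₂ : List X) (lt : BRel) (U₁' U₂' : List X) (lt' : BRel) : Prop :=
  ExtNielsen U₁ U₂ lt U₁' U₂' lt' ∧ Coherent U₁' U₂' lt'

/-- `(U₁, U₂, lt)` is (strongly) terminating: there is no infinite sequence of coherent
extended Nielsen transformations starting from it. -/
def Terminating (U₁ U₂ : List X) (lt : BRel) : Prop :=
  ¬ ∃ f : ℕ → List X × List X × BRel,
    f 0 = (U₁, U₂, lt) ∧
    ∀ n, CohNielsen (f n).1 (f n).2.1 (f n).2.2 (f (n + 1)).1 (f (n + 1)).2.1 (f (n + 1)).2.2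

end ExtWordEq

/-! Writing `x = U_{1,1}`, `y = U_{2,1}` and `T(x) = y x`, each side `U'_i` is `T(U_i)` with its
leading `y` removed; coherence gives `L y < L x`, so `y ≠ x`. A prefix of `T(U_i)` ends either
at the end of the image of a prefix `U_{i,1} ⋯ U_{i,j}` — and then the boundary lies in `B'⁻`,
as `μ(i,j)` — or between the `y` and the `x` of the image of an occurrence `U_{i,p} = x`. In the
latter case `ν` recovers `(i,p)`, and `p ≥ 2` since the leading `y` was removed, so `(i,p-1)`
lies strictly above `(1,0)` and `(i,p)` mirrors `(1,1)`. -/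

namespace ExtWordEq

variable {X : Type*} {U₁ U₂ : List X} {lt : BRel}

lemma BoundaryOrder.lt_of_incomp_of_lt (hbo : BoundaryOrder U₁ U₂ lt) {a b c : ℕ × ℕ}
    (ha : EBoundary U₁ U₂ a) (hb : EBoundary U₁ U₂ b) (hc : EBoundary U₁ U₂ c)
    (hab : Incomp lt a b) (hbc : lt b c) : lt a c := by
  by_contra hac
  by_cases hca : lt c a
  · exact hab.2 (hbo.trans b c a hb hc ha hbc hca)
  · exact (hbo.incomp_trans b a c hb ha hc ⟨hab.2, hab.1⟩ ⟨hac, hca⟩).1 hbc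

lemma BoundaryOrder.zero_lt (hbo : BoundaryOrder U₁ U₂ lt) {i m : ℕ} (hi : i = 1 ∨ i = 2)
    (hm : 1 ≤ m) (hmi : m ≤ (word U₁ U₂ i).length) : lt (i, 0) (i, m) := by
  induction m, hm using Nat.le_induction with
  | base => exact hbo.succ i 0 ⟨hi, hmi⟩
  | succ m hm ih =>
    exact hbo.trans _ _ _ ⟨hi, Nat.zero_le _⟩ ⟨hi, m.le_succ.trans hmi⟩ ⟨hi, hmi⟩ (ih (by omega))
      (hbo.succ i m ⟨hi, hmi⟩)

lemma BoundaryOrder.one_zero_lt (hbo : BoundaryOrder U₁ U₂ lt) {i m : ℕ} (hi : i = 1 ∨ i = 2)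
    (hm : 1 ≤ m) (hmi : m ≤ (word U₁ U₂ i).length) : lt (1, 0) (i, m) := by
  rcases hi with rfl | rfl
  · exact hbo.zero_lt (.inl rfl) hm hmi
  · exact hbo.lt_of_incomp_of_lt ⟨.inl rfl, Nat.zero_le _⟩ ⟨.inr rfl, Nat.zero_le _⟩
      ⟨.inr rfl, hmi⟩ hbo.bot (hbo.zero_lt (.inr rfl) hm hmi)

lemma Coherent.head_ne_of_lt {x y : X} (hcoh : Coherent U₁ U₂ lt) (hx : U₁.head? = some x)
    (hy : U₂.head? = some y) (hlt : lt (2, 1) (1, 1)) : y ≠ x := by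
  obtain ⟨L, -, hL⟩ := hcoh
  obtain ⟨t, rfl⟩ := List.head?_eq_some_iff.mp hx
  obtain ⟨s, rfl⟩ := List.head?_eq_some_iff.mp hy
  have h := (hL (2, 1) (1, 1) ⟨.inr rfl, le_rfl, by simp [word]⟩
    ⟨.inl rfl, le_rfl, by simp [word]⟩).mp hlt
  simp only [prefixLen, word] at h
  rintro rfl
  simp at h

lemma mirrors_one_one_of_getElem? {x : X} (hbo : BoundaryOrder U₁ U₂ lt)
    (hx : U₁.head? = some x) {i q : ℕ} (hi : i = 1 ∨ i = 2) (hq : 1 ≤ q)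
    (hqx : (word U₁ U₂ i)[q]? = some x) : Mirrors U₁ U₂ lt (i, q + 1) (1, 1) := by
  have hqi : q < (word U₁ U₂ i).length := (List.getElem?_eq_some_iff.mp hqx).1
  have hU₁ : 0 < U₁.length := List.length_pos_of_mem (List.mem_of_mem_head? hx)
  refine ⟨⟨hi, by omega, hqi⟩, ⟨.inl rfl, le_rfl, by simpa [word]⟩, ?_, .inr ?_⟩
  · simpa [letter, word, List.head?_eq_getElem?] using hqx.trans hx.symm
  · exact fun h => h.2 (hbo.one_zero_lt hi hq hqi.le)

variable [DecidableEq X]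

section Expand

variable (x y : X)

@[simp]
lemma expand_nil : expand x y [] = [] := rfl

@[simp]
lemma expand_cons (a : X) (l : List X) :
    expand x y (a :: l) = (if a = x then [y, x] else [a]) ++ expand x y l := by
  simp [expand]

lemma length_expand (l : List X) : (expand x y l).length = l.length + l.count x := by
  induction l with
  | nil => rfl
  | cons a t ih => by_cases h : a = x <;> simp [h, ih] <;> omega

lemma count_expand {x y : X} (hyx : y ≠ x) (l : List X) :
    (expand x y l).count x = l.count x := by
  induction l with
  | nil => rfl
  | cons a t ih => by_cases h : a = x <;> simp [h, ih, hyx]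

lemma take_expand (V : List X) (k : ℕ) :
    (∃ j ≤ V.length, (expand x y V).take k = expand x y (V.take j)) ∨
    (∃ q, V[q]? = some x ∧ (expand x y V).take k = expand x y (V.take q) ++ [y]) := by
  induction V generalizing k with
  | nil => exact .inl ⟨0, le_rfl, by simp⟩
  | cons a t ih =>
    rcases k with _ | k
    · exact .inl ⟨0, Nat.zero_le _, by simp⟩
    by_cases hax : a = x
    · subst hax
      rcases k with _ | k
      · exact .inr ⟨0, rfl, by simp⟩
      rcases ih k with ⟨j, hj, hjk⟩ | ⟨q, hq, hqk⟩
      · exact .inl ⟨j + 1, by simpa using hj, by simp [hjk]⟩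
      · exact .inr ⟨q + 1, hq, by simp [hqk]⟩
    · rcases ih k with ⟨j, hj, hjk⟩ | ⟨q, hq, hqk⟩
      · exact .inl ⟨j + 1, by simpa using hj, by simp [hax, hjk]⟩
      · exact .inr ⟨q + 1, hq, by simp [hax, hqk]⟩

lemma mu_eq_or_nu_eq_of_expand_eq_cons {x y : X} (hyx : y ≠ x) {V V' : List X}
    (hV : expand x y V = y :: V') {j' : ℕ} (hj' : 1 ≤ j') (hj'V : j' ≤ V'.length) :
    (∃ j, 1 ≤ j ∧ j ≤ V.length ∧ (2 ≤ j ∨ V.head? = some x) ∧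
      j + (V.take j).count x - 1 = j') ∨
    (∃ q, 1 ≤ q ∧ V[q]? = some x ∧ j' - (V'.take j').count x + 1 = q + 1) := by
  have htake : (expand x y V).take (j' + 1) = y :: V'.take j' := by simp [hV]
  rcases take_expand x y V (j' + 1) with ⟨j, hjV, hj⟩ | ⟨q, hq, hqk⟩
  · have hlen := congrArg List.length (htake.symm.trans hj)
    rw [length_expand, List.length_take_of_le hjV, List.length_cons,
      List.length_take_of_le hj'V] at hlen
    obtain rfl | rfl | h2j : j = 0 ∨ j = 1 ∨ 2 ≤ j := by omega
    · simp at hlen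
    · obtain ⟨a, V, rfl⟩ := List.exists_cons_of_length_pos hjV
      refine .inl ⟨1, le_rfl, hjV, .inr ?_, by omega⟩
      by_cases hax : a = x <;> simp [hax] at hlen ⊢
      omega
    · exact .inl ⟨j, by omega, hjV, .inl h2j, by omega⟩
  · have hqV : q < V.length := (List.getElem?_eq_some_iff.mp hq).1
    have hprefix := htake.symm.trans hqk
    have hlen := congrArg List.length hprefix
    have hcount := congrArg (List.count x) hprefix
    rw [List.length_cons, List.length_take_of_le hj'V, List.length_append, length_expand,
      List.length_take_of_le hqV.le, List.length_singleton] at hlen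
    simp only [List.count_cons, List.count_append, List.count_nil, count_expand hyx,
      beq_iff_eq, hyx, if_false, add_zero] at hcount
    have hcq := List.count_le_length (a := x) (l := V.take q)
    rw [List.length_take_of_le hqV.le] at hcq
    exact .inr ⟨q, by omega, hq, by omega⟩

end Expand

section NielsenII

variable {U₁' U₂' : List X} {lt' : BRel} {x y : X}

lemma NielsenIIxy.expand_word (hII : NielsenIIxy U₁ U₂ lt U₁' U₂' lt' x y) (hyx : y ≠ x)
    (i : ℕ) : expand x y (word U₁ U₂ i) = y :: word U₁' U₂' i := by
  obtain ⟨hx, hy, -, rfl, rfl, -⟩ := hII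
  obtain ⟨t, rfl⟩ := List.head?_eq_some_iff.mp hx
  obtain ⟨s, rfl⟩ := List.head?_eq_some_iff.mp hy
  unfold word
  split_ifs <;> simp [hyx]

lemma NielsenIIxy.mem_Bpminus_or (hII : NielsenIIxy U₁ U₂ lt U₁' U₂' lt' x y) (hyx : y ≠ x)
    {i j' : ℕ} (hb : Boundary U₁' U₂' (i, j')) :
    Bpminus U₁ U₂ x (i, j') ∨
      ∃ q, 1 ≤ q ∧ (word U₁ U₂ i)[q]? = some x ∧ nu U₁' U₂' x (i, j') = (i, q + 1) := by
  obtain ⟨hi, hj', hj'i⟩ := hb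
  rcases mu_eq_or_nu_eq_of_expand_eq_cons hyx (hII.expand_word hyx i) hj' hj'i with
    ⟨j, hj, hji, hj2, hmu⟩ | ⟨q, hq, hqx, hnu⟩
  · refine .inl ⟨(i, j), ⟨⟨hi, hj, hji⟩, ?_⟩, by simp [mu, hmu]⟩
    rintro ⟨⟩
    simp only [word, OfNat.ofNat_ne_one, if_false, hII.2.1, Nat.not_ofNat_le_one,
      false_or, Option.some.injEq] at hj2
    exact hyx hj2
  · exact .inr ⟨q, hq, hqx, by simp [nu, hnu]⟩

end NielsenII

theorem mirrors_one_one_of_mem_Bpplus_general (U₁ U₂ U₁' U₂' : List X) (lt lt' : BRel)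
    (x y : X)
    (hbo : BoundaryOrder U₁ U₂ lt)
    (hcoh : Coherent U₁ U₂ lt)
    (hII : NielsenIIxy U₁ U₂ lt U₁' U₂' lt' x y) :
    ∀ b, Boundary U₁' U₂' b → ¬ Bpminus U₁ U₂ x b →
      Mirrors U₁ U₂ lt (nu U₁' U₂' x b) (1, 1) := by
  rintro ⟨i, j'⟩ hb hnb
  have hyx : y ≠ x := hcoh.head_ne_of_lt hII.1 hII.2.1 hII.2.2.1
  obtain ⟨q, hq, hqx, hnu⟩ := (hII.mem_Bpminus_or hyx hb).resolve_left hnb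
  rw [hnu]
  exact mirrors_one_one_of_getElem? hbo hII.1 hb.1 hq hqx

/-- **Lemma.** After a case II coherent extended Nielsen transformation, every
boundary `(i,j) ∈ B'⁺` satisfies: `(i,ν(i,j))` mirrors `(1,1)` with respect to
`(U₁,U₂,<)`. -/
theorem mirrors_one_one_of_mem_Bpplus (U₁ U₂ U₁' U₂' : List X) (lt lt' : BRel)
    (x y : X)
    (h₁ : U₁ ≠ []) (h₂ : U₂ ≠ []) (hbo : BoundaryOrder U₁ U₂ lt)
    (hcoh : Coherent U₁ U₂ lt)
    (hII : NielsenIIxy U₁ U₂ lt U₁' U₂' lt' x y) (hcoh' : Coherent U₁' U₂' lt') :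
    ∀ b, Boundary U₁' U₂' b → ¬ Bpminus U₁ U₂ x b →
      Mirrors U₁ U₂ lt (nu U₁' U₂' x b) (1, 1) :=
  mirrors_one_one_of_mem_Bpplus_general U₁ U₂ U₁' U₂' lt lt' x y hbo hcoh hII

end ExtWordEq
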